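/- arXiv:2006.00602 — 5 statements merged into one kernel-verified Lean document; each statement's English description precedes it below -/
import Mathlib

section
/- For any orthogonal projection matrix Π, ‖Π‖_{∞→2} = ‖Π‖_{2→1}. -/
open scoped BigOperators
open Matrix

noncomputable def lpNorm {n : ℕ} (p : ℝ) (v : Fin n → ℝ) : ℝ :=
  (∑ i, |v i| ^ p) ^ (1 / p)

noncomputable def opNorm {m n : ℕ} (p q : ℝ) (A : Matrix (Fin m) (Fin n) ℝ) : ℝ :=
  sSup {t : ℝ | ∃ v : Fin n → ℝ, v ≠ 0 ∧ t = lpNorm q (A.mulVec v) / lpNorm p v}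

noncomputable def frobSq {m n : ℕ} (A : Matrix (Fin m) (Fin n) ℝ) : ℝ :=
  ∑ i, ∑ j, (A i j) ^ 2

noncomputable def linfNorm {n : ℕ} (v : Fin n → ℝ) : ℝ := ⨆ i, |v i|

noncomputable def opNormInfTwo {n : ℕ} (A : Matrix (Fin n) (Fin n) ℝ) : ℝ :=
  sSup {t : ℝ | ∃ v : Fin n → ℝ, v ≠ 0 ∧ t = lpNorm 2 (A.mulVec v) / linfNorm v}

namespace Stmt4Aux

variable {n : ℕ}

lemma rpow_two' (x : ℝ) : x ^ (2:ℝ) = x ^ 2 := by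
  rw [show (2:ℝ) = ((2:ℕ):ℝ) by norm_num, Real.rpow_natCast]

lemma lpNorm_one (v : Fin n → ℝ) : lpNorm 1 v = ∑ i, |v i| := by
  simp [lpNorm]

lemma lpNorm_two (v : Fin n → ℝ) : lpNorm 2 v = Real.sqrt (∑ i, (v i) ^ 2) := by
  rw [lpNorm, Real.sqrt_eq_rpow]
  congr 1
  refine Finset.sum_congr rfl fun i _ => ?_
  rw [rpow_two', sq_abs]

lemma lp1_nonneg (v : Fin n → ℝ) : 0 ≤ lpNorm 1 v := by
  rw [lpNorm_one]; exact Finset.sum_nonneg fun i _ => abs_nonneg _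

lemma lp2_nonneg (v : Fin n → ℝ) : 0 ≤ lpNorm 2 v := by
  rw [lpNorm_two]; exact Real.sqrt_nonneg _

lemma abs_le_linf (v : Fin n → ℝ) (i : Fin n) : |v i| ≤ linfNorm v := by
  rw [linfNorm]
  exact le_ciSup (f := fun i => |v i|) (Set.Finite.bddAbove (Set.finite_range _)) i

lemma linf_nonneg [NeZero n] (v : Fin n → ℝ) : 0 ≤ linfNorm v :=
  le_trans (abs_nonneg (v 0)) (abs_le_linf v 0)

lemma linf_le_lp2 (v : Fin n → ℝ) : linfNorm v ≤ lpNorm 2 v := by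
  rw [lpNorm_two, linfNorm]
  rcases Nat.eq_zero_or_pos n with h | h
  · subst h; simp [Real.iSup_of_isEmpty, Real.sqrt_nonneg]
  · have : NeZero n := ⟨h.ne'⟩
    refine ciSup_le fun i => ?_
    rw [show |v i| = Real.sqrt ((v i)^2) by rw [Real.sqrt_sq_eq_abs]]
    exact Real.sqrt_le_sqrt (Finset.single_le_sum (fun j _ => sq_nonneg (v j)) (Finset.mem_univ i))

lemma lp2_le_lp1 (v : Fin n → ℝ) : lpNorm 2 v ≤ lpNorm 1 v := by
  rw [lpNorm_two, lpNorm_one]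
  rw [show ∑ i, (v i)^2 = ∑ i, |v i|^2 by simp [sq_abs]]
  calc Real.sqrt (∑ i, |v i|^2) ≤ Real.sqrt ((∑ i, |v i|)^2) :=
        Real.sqrt_le_sqrt (Finset.sum_sq_le_sq_sum_of_nonneg fun i _ => abs_nonneg _)
    _ = ∑ i, |v i| := Real.sqrt_sq (Finset.sum_nonneg fun i _ => abs_nonneg _)

lemma lp2_pos {v : Fin n → ℝ} (hv : v ≠ 0) : 0 < lpNorm 2 v := by
  rw [lpNorm_two]
  apply Real.sqrt_pos.mpr
  obtain ⟨i, hi⟩ := Function.ne_iff.mp hv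
  exact Finset.sum_pos' (fun j _ => sq_nonneg _)
    ⟨i, Finset.mem_univ i, pow_pos (abs_pos.mpr hi) 2 |>.trans_eq (sq_abs _)⟩

lemma linf_pos {v : Fin n → ℝ} (hv : v ≠ 0) : 0 < linfNorm v := by
  obtain ⟨i, hi⟩ := Function.ne_iff.mp hv
  exact lt_of_lt_of_le (abs_pos.mpr hi) (abs_le_linf v i)

-- Hölder ∞-1
lemma holder (u w : Fin n → ℝ) : |∑ i, u i * w i| ≤ linfNorm u * ∑ i, |w i| := by
  rcases Nat.eq_zero_or_pos n with h | h
  · subst h; simp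
  · have hn : NeZero n := ⟨h.ne'⟩
    calc |∑ i, u i * w i| ≤ ∑ i, |u i * w i| := Finset.abs_sum_le_sum_abs _ _
      _ = ∑ i, |u i| * |w i| := by simp [abs_mul]
      _ ≤ ∑ i, linfNorm u * |w i| :=
          Finset.sum_le_sum fun i _ => mul_le_mul_of_nonneg_right (abs_le_linf u i) (abs_nonneg _)
      _ = linfNorm u * ∑ i, |w i| := by rw [Finset.mul_sum]

-- Cauchy-Schwarz
lemma cauchy (a b : Fin n → ℝ) : |∑ i, a i * b i| ≤ lpNorm 2 a * lpNorm 2 b := by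
  rw [lpNorm_two, lpNorm_two, ← Real.sqrt_mul (Finset.sum_nonneg fun i _ => sq_nonneg _),
    ← Real.sqrt_sq_eq_abs]
  exact Real.sqrt_le_sqrt (Finset.sum_mul_sq_le_sq_mul_sq _ _ _)

-- symmetric swap
lemma swap {P : Matrix (Fin n) (Fin n) ℝ} (hsymm : P.IsSymm) (u w : Fin n → ℝ) :
    ∑ i, u i * (P.mulVec w) i = ∑ j, (P.mulVec u) j * w j := by
  simp only [Matrix.mulVec, dotProduct, Finset.mul_sum, Finset.sum_mul]
  rw [Finset.sum_comm]
  refine Finset.sum_congr rfl fun j _ => Finset.sum_congr rfl fun i _ => ?_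
  rw [hsymm.apply i j]
  ring

end Stmt4Aux

open Stmt4Aux in
theorem stmt4 {n : ℕ} (P : Matrix (Fin n) (Fin n) ℝ)
    (hsymm : P.IsSymm) (hidem : P * P = P) :
    opNormInfTwo P = opNorm 2 1 P := by
  rcases Nat.eq_zero_or_pos n with h | hpos
  · subst h
    have he : ∀ (v : Fin 0 → ℝ), v = 0 := fun v => funext fun i => i.elim0
    rw [opNormInfTwo, opNorm]
    have : ∀ (S : (Fin 0 → ℝ) → ℝ → Prop),
        {t : ℝ | ∃ v : Fin 0 → ℝ, v ≠ 0 ∧ S v t} = ∅ := fun S =>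
      Set.eq_empty_of_forall_notMem (fun t ⟨v, hv, _⟩ => hv (he v))
    rw [this fun v t => t = lpNorm 2 (P.mulVec v) / linfNorm v,
        this fun v t => t = lpNorm 1 (P.mulVec v) / lpNorm 2 v]
  · have hn : NeZero n := ⟨hpos.ne'⟩
    set C := opNorm 2 1 P with hC
    set D := opNormInfTwo P with hD
    have M := ∑ i, ∑ j, |P i j|
    -- uniform bound for mulVec in lp1 by linf
    have key1 : ∀ v : Fin n → ℝ, lpNorm 1 (P.mulVec v) ≤ (∑ i, ∑ j, |P i j|) * linfNorm v := by
      intro v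
      rw [lpNorm_one]
      calc ∑ i, |(P.mulVec v) i| ≤ ∑ i, ∑ j, |P i j| * |v j| := by
            refine Finset.sum_le_sum fun i _ => ?_
            simp only [Matrix.mulVec, dotProduct]
            calc |∑ j, P i j * v j| ≤ ∑ j, |P i j * v j| := Finset.abs_sum_le_sum_abs _ _
              _ = ∑ j, |P i j| * |v j| := by simp [abs_mul]
        _ ≤ ∑ i, ∑ j, |P i j| * linfNorm v := by
            refine Finset.sum_le_sum fun i _ => Finset.sum_le_sum fun j _ =>
              mul_le_mul_of_nonneg_left (abs_le_linf v j) (abs_nonneg _)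
        _ = (∑ i, ∑ j, |P i j|) * linfNorm v := by rw [Finset.sum_mul]; congr 1; ext i; rw [Finset.sum_mul]
    -- bddAbove of both sets
    have hM0 : (0:ℝ) ≤ ∑ i, ∑ j, |P i j| :=
      Finset.sum_nonneg fun i _ => Finset.sum_nonneg fun j _ => abs_nonneg _
    have bddC : BddAbove {t : ℝ | ∃ v : Fin n → ℝ, v ≠ 0 ∧ t = lpNorm 1 (P.mulVec v) / lpNorm 2 v} := by
      refine ⟨∑ i, ∑ j, |P i j|, ?_⟩
      rintro t ⟨v, hv, rfl⟩
      rw [div_le_iff₀ (lp2_pos hv)]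
      calc lpNorm 1 (P.mulVec v) ≤ (∑ i, ∑ j, |P i j|) * linfNorm v := key1 v
        _ ≤ (∑ i, ∑ j, |P i j|) * lpNorm 2 v := mul_le_mul_of_nonneg_left (linf_le_lp2 v) hM0
    have bddD : BddAbove {t : ℝ | ∃ v : Fin n → ℝ, v ≠ 0 ∧ t = lpNorm 2 (P.mulVec v) / linfNorm v} := by
      refine ⟨∑ i, ∑ j, |P i j|, ?_⟩
      rintro t ⟨v, hv, rfl⟩
      rw [div_le_iff₀ (linf_pos hv)]
      exact le_trans (lp2_le_lp1 _) (key1 v)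
    -- nonnegativity of C and D
    have hone : (fun _ : Fin n => (1:ℝ)) ≠ 0 := by
      intro h; have := congrFun h 0; simp at this
    have hC0 : 0 ≤ C :=
      le_trans (div_nonneg (lp1_nonneg _) (lp2_nonneg _)) (le_csSup bddC ⟨_, hone, rfl⟩)
    have hD0 : 0 ≤ D :=
      le_trans (div_nonneg (lp2_nonneg _) (linf_nonneg _)) (le_csSup bddD ⟨_, hone, rfl⟩)
    -- C bounds: lp1 (P w) ≤ C * lp2 w
    have hCb : ∀ w : Fin n → ℝ, lpNorm 1 (P.mulVec w) ≤ C * lpNorm 2 w := by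
      intro w
      by_cases hw : w = 0
      · subst hw
        rw [Matrix.mulVec_zero]
        have h1 : lpNorm 1 (0 : Fin n → ℝ) = 0 := by simp [lpNorm_one]
        have h2 : lpNorm 2 (0 : Fin n → ℝ) = 0 := by simp [lpNorm_two]
        rw [h1, h2, mul_zero]
      · exact (div_le_iff₀ (lp2_pos hw)).mp (le_csSup bddC ⟨w, hw, rfl⟩)
    -- inequality (ii): lp2 (P v) ≤ C * linf v
    have hii : ∀ v : Fin n → ℝ, lpNorm 2 (P.mulVec v) ≤ C * linfNorm v := by
      intro v
      set w := P.mulVec v with hw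
      have hsq : lpNorm 2 w * lpNorm 2 w = ∑ i, w i * w i := by
        rw [lpNorm_two, Real.mul_self_sqrt (Finset.sum_nonneg fun i _ => sq_nonneg _)]
        exact Finset.sum_congr rfl fun i _ => pow_two (w i)
      have h1 : lpNorm 2 w * lpNorm 2 w ≤ linfNorm v * (C * lpNorm 2 w) := by
        calc lpNorm 2 w * lpNorm 2 w = ∑ i, w i * w i := hsq
          _ = ∑ i, v i * (P.mulVec w) i := by
              rw [swap hsymm v w]
          _ ≤ |∑ i, v i * (P.mulVec w) i| := le_abs_self _
          _ ≤ linfNorm v * ∑ i, |(P.mulVec w) i| := holder _ _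
          _ = linfNorm v * lpNorm 1 (P.mulVec w) := by rw [lpNorm_one]
          _ ≤ linfNorm v * (C * lpNorm 2 w) :=
              mul_le_mul_of_nonneg_left (hCb w) (linf_nonneg v)
      rcases eq_or_lt_of_le (lp2_nonneg w) with h0 | h0
      · rw [← h0]; exact mul_nonneg hC0 (linf_nonneg v)
      · have := le_of_mul_le_mul_right (by linarith [h1] : lpNorm 2 w * lpNorm 2 w ≤ (C * linfNorm v) * lpNorm 2 w) h0
        exact this
    -- inequality (i): lp1 (P v) ≤ D * lp2 v, via sign vectors
    have hi : ∀ v : Fin n → ℝ, lpNorm 1 (P.mulVec v) ≤ D * lpNorm 2 v := by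
      intro v
      set s : Fin n → ℝ := fun i => if 0 ≤ (P.mulVec v) i then 1 else -1 with hs
      have habs : ∀ i, |s i| = 1 := by
        intro i; by_cases h : 0 ≤ (P.mulVec v) i <;> simp [hs, h]
      have hsne : s ≠ 0 := by
        intro h
        have := habs 0
        rw [congrFun h 0] at this
        simp at this
      have hlinfs : linfNorm s = 1 := by
        rw [linfNorm]
        simp only [habs]
        exact ciSup_const
      have hPs : lpNorm 2 (P.mulVec s) ≤ D := by
        have := le_csSup bddD ⟨s, hsne, rfl⟩
        rwa [hlinfs, div_one] at this
      calc lpNorm 1 (P.mulVec v) = ∑ i, |(P.mulVec v) i| := lpNorm_one _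
        _ = ∑ i, s i * (P.mulVec v) i := by
            refine Finset.sum_congr rfl fun i _ => ?_
            by_cases h : 0 ≤ (P.mulVec v) i
            · rw [abs_of_nonneg h]; simp [hs, h]
            · rw [abs_of_neg (lt_of_not_ge h)]; simp [hs, h]
        _ = ∑ j, (P.mulVec s) j * v j := swap hsymm s v
        _ ≤ |∑ j, (P.mulVec s) j * v j| := le_abs_self _
        _ ≤ lpNorm 2 (P.mulVec s) * lpNorm 2 v := cauchy _ _
        _ ≤ D * lpNorm 2 v := mul_le_mul_of_nonneg_right hPs (lp2_nonneg _)
    -- conclude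
    refine le_antisymm (Real.sSup_le ?_ hC0) (Real.sSup_le ?_ hD0)
    · rintro t ⟨v, hv, rfl⟩
      rw [div_le_iff₀ (linf_pos hv)]
      exact hii v
    · rintro t ⟨v, hv, rfl⟩
      rw [div_le_iff₀ (lp2_pos hv)]
      exact hi v
end

section
/- Let Π be an orthogonal projection of rank r with ‖Π‖_{q→2} ≤ κ for q > 2. Then any vector v in the range of Π satisfies ‖v‖_{q*} ≤ κ‖v‖_2, and the entry-wise ℓ_{q*} norm of Π satisfies ‖Π‖_{q*} ≤ r·κ². -/
open scoped BigOperators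
open Matrix

/-!
For `v = Π v`, test `v` against its Hölder dual `u`, for which `∑ i, u i * v i = ‖v‖_{q*} ^ q*`
and `‖u‖_q = ‖v‖_{q*} ^ (q* - 1)`. As `Π` is symmetric,
`∑ i, u i * v i = ⟪Π u, v⟫ ≤ ‖Π u‖₂ ‖v‖₂ ≤ κ ‖u‖_q ‖v‖₂`, which gives `‖v‖_{q*} ≤ κ ‖v‖₂`.

Since `Π = Π Πᵀ`, `Π` is the sum of the rank-one matrices `c_k c_kᵀ` built from its columns,
which lie in its range. Minkowski's inequality then gives
`‖Π‖_{q*} ≤ ∑ k, ‖c_k‖_{q*}² ≤ κ² ∑ k, ‖c_k‖₂² = κ² tr Π = κ² r`.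
-/

section lpNorm

variable {n : ℕ} {p : ℝ}

lemma lpNorm_nonneg (p : ℝ) (v : Fin n → ℝ) : 0 ≤ lpNorm p v := by
  unfold lpNorm
  positivity

lemma lpNorm_zero (hp : p ≠ 0) : lpNorm p (0 : Fin n → ℝ) = 0 := by
  simp [lpNorm, Real.zero_rpow hp, hp]

lemma abs_le_lpNorm (hp : 0 < p) (v : Fin n → ℝ) (j : Fin n) : |v j| ≤ lpNorm p v := by
  calc |v j| = (|v j| ^ p) ^ (1 / p) := by
        rw [← Real.rpow_mul (abs_nonneg _), mul_one_div_cancel hp.ne', Real.rpow_one]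
    _ ≤ lpNorm p v := by
        unfold lpNorm
        gcongr
        exact Finset.single_le_sum (f := fun i => |v i| ^ p) (fun i _ => by positivity)
          (Finset.mem_univ j)

lemma lpNorm_pos (hp : 0 < p) {v : Fin n → ℝ} (hv : v ≠ 0) : 0 < lpNorm p v := by
  obtain ⟨j, hj⟩ := Function.ne_iff.mp hv
  exact (abs_pos.mpr hj).trans_le (abs_le_lpNorm hp v j)

lemma lpNorm_le_of_forall_abs_le (hp : 0 < p) {v : Fin n → ℝ} {c : ℝ} (hc0 : 0 ≤ c)
    (hc : ∀ i, |v i| ≤ c) : lpNorm p v ≤ (n : ℝ) ^ (1 / p) * c := by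
  calc lpNorm p v ≤ (∑ _i : Fin n, c ^ p) ^ (1 / p) := by
        unfold lpNorm
        gcongr with i
        exact hc i
    _ = (n : ℝ) ^ (1 / p) * c := by
        rw [Finset.sum_const, Finset.card_univ, Fintype.card_fin, nsmul_eq_mul,
          Real.mul_rpow (Nat.cast_nonneg n) (by positivity), ← Real.rpow_mul hc0,
          mul_one_div_cancel hp.ne', Real.rpow_one]

lemma lpNorm_two_sq (v : Fin n → ℝ) : lpNorm 2 v ^ 2 = ∑ i, v i ^ 2 := by
  rw [lpNorm, ← Real.sqrt_eq_rpow, Real.sq_sqrt (by positivity)]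
  simp only [Real.rpow_two, sq_abs]

end lpNorm

section opNorm

variable {m n : ℕ} {p q κ : ℝ}

lemma abs_mulVec_le (hp : 0 < p) (A : Matrix (Fin m) (Fin n) ℝ) (v : Fin n → ℝ) (i : Fin m) :
    |(A *ᵥ v) i| ≤ (∑ i, ∑ j, |A i j|) * lpNorm p v :=
  calc |(A *ᵥ v) i| ≤ ∑ j, |A i j| * |v j| := by
        simpa only [mulVec, dotProduct, abs_mul] using
          Finset.abs_sum_le_sum_abs (fun j => A i j * v j) Finset.univ
    _ ≤ ∑ j, |A i j| * lpNorm p v := by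
        gcongr with j
        exact abs_le_lpNorm hp v j
    _ = (∑ j, |A i j|) * lpNorm p v := (Finset.sum_mul ..).symm
    _ ≤ (∑ i, ∑ j, |A i j|) * lpNorm p v := by
        gcongr
        · exact lpNorm_nonneg p v
        · exact Finset.single_le_sum (f := fun i => ∑ j, |A i j|)
            (fun i _ => by positivity) (Finset.mem_univ i)

/-- Without it, `opNorm`, an `sSup`, could take the junk value `0`. -/
lemma bddAbove_lpNorm_mulVec_div (hp : 0 < p) (hq : 0 < q) (A : Matrix (Fin m) (Fin n) ℝ) :
    BddAbove {t : ℝ | ∃ v : Fin n → ℝ, v ≠ 0 ∧ t = lpNorm q (A *ᵥ v) / lpNorm p v} := by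
  refine ⟨(m : ℝ) ^ (1 / q) * ∑ i, ∑ j, |A i j|, ?_⟩
  rintro t ⟨v, hv, rfl⟩
  rw [div_le_iff₀ (lpNorm_pos hp hv), mul_assoc]
  exact lpNorm_le_of_forall_abs_le hq (by positivity [lpNorm_nonneg p v])
    (abs_mulVec_le hp A v)

lemma lpNorm_mulVec_le_of_opNorm_le (hp : 0 < p) (hq : 0 < q) {A : Matrix (Fin m) (Fin n) ℝ}
    (hA : opNorm p q A ≤ κ) (v : Fin n → ℝ) : lpNorm q (A *ᵥ v) ≤ κ * lpNorm p v := by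
  rcases eq_or_ne v 0 with rfl | hv
  · simp [lpNorm_zero hq.ne', lpNorm_zero hp.ne']
  rw [← div_le_iff₀ (lpNorm_pos hp hv)]
  exact (le_csSup (bddAbove_lpNorm_mulVec_div hp hq A) ⟨v, hv, rfl⟩).trans hA

end opNorm

section holderDual

variable {n : ℕ} {p q : ℝ}

/-- The dual vector at which Hölder's inequality `∑ i, u i * v i ≤ ‖u‖_q ‖v‖_p` is an equality. -/
noncomputable def holderDual (p : ℝ) (v : Fin n → ℝ) : Fin n → ℝ :=
  fun i => v i * |v i| ^ (p - 2)

lemma holderDual_mul_self (hp : p ≠ 0) (v : Fin n → ℝ) (i : Fin n) :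
    holderDual p v i * v i = |v i| ^ p := by
  rcases eq_or_ne (v i) 0 with h | h
  · simp [holderDual, h, Real.zero_rpow hp]
  · have h' : |v i| ≠ 0 := abs_ne_zero.mpr h
    calc holderDual p v i * v i = |v i| ^ (p - 2) * |v i| * |v i| := by
          rw [holderDual]; linear_combination (-|v i| ^ (p - 2)) * abs_mul_abs_self (v i)
      _ = |v i| ^ p := by
          rw [← Real.rpow_add_one h', ← Real.rpow_add_one h']; ring_nf

lemma abs_holderDual (hp : p ≠ 1) (v : Fin n → ℝ) (i : Fin n) :
    |holderDual p v i| = |v i| ^ (p - 1) := by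
  rcases eq_or_ne (v i) 0 with h | h
  · simp [holderDual, h, Real.zero_rpow (sub_ne_zero.mpr hp)]
  · rw [holderDual, abs_mul, abs_of_nonneg (Real.rpow_nonneg (abs_nonneg _) _), mul_comm,
      ← Real.rpow_add_one (abs_ne_zero.mpr h)]
    ring_nf

lemma lpNorm_holderDual (hpq : p.HolderConjugate q) (v : Fin n → ℝ) :
    lpNorm q (holderDual p v) = (∑ i, |v i| ^ p) ^ (1 / q) := by
  unfold lpNorm
  congr 1
  refine Finset.sum_congr rfl fun i _ => ?_
  rw [abs_holderDual hpq.lt.ne', ← Real.rpow_mul (abs_nonneg _), hpq.sub_one_mul_conj]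

lemma lpNorm_le_of_forall_sum_mul_le (hpq : p.HolderConjugate q) {v : Fin n → ℝ} (hv : v ≠ 0)
    {C : ℝ} (h : ∀ u, ∑ i, u i * v i ≤ C * lpNorm q u) : lpNorm p v ≤ C := by
  set s := ∑ i, |v i| ^ p
  have hs : 0 < s := by
    obtain ⟨j, hj⟩ := Function.ne_iff.mp hv
    exact Finset.sum_pos' (fun i _ => by positivity)
      ⟨j, Finset.mem_univ j, by simp only [Pi.zero_apply] at hj; positivity⟩
  have hsC : s ≤ C * s ^ (1 / q) := by
    simpa [holderDual_mul_self hpq.ne_zero, lpNorm_holderDual hpq] using h (holderDual p v)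
  have hsplit : lpNorm p v * s ^ (1 / q) = s := by
    rw [lpNorm, ← Real.rpow_add hs, one_div, one_div, hpq.inv_add_inv_eq_one, Real.rpow_one]
  exact le_of_mul_le_mul_right (hsplit.trans_le hsC) (by positivity)

end holderDual

lemma Lp_sum_le_sum_Lp {ι α : Type*} [Fintype α] (s : Finset ι) (f : ι → α → ℝ) {p : ℝ}
    (hp : 1 ≤ p) :
    (∑ a, |∑ i ∈ s, f i a| ^ p) ^ (1 / p) ≤ ∑ i ∈ s, (∑ a, |f i a| ^ p) ^ (1 / p) := by
  induction s using Finset.cons_induction with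
  | empty =>
    simp [Real.zero_rpow (by positivity : p ≠ 0), Real.zero_rpow (by positivity : p⁻¹ ≠ 0)]
  | cons i s hi ih =>
    simp only [Finset.sum_cons]
    exact (Real.Lp_add_le _ _ _ hp).trans (by gcongr)

lemma Lp_mul_eq_lpNorm_mul_lpNorm {n : ℕ} (p : ℝ) (x y : Fin n → ℝ) :
    (∑ ij : Fin n × Fin n, |x ij.1 * y ij.2| ^ p) ^ (1 / p) = lpNorm p x * lpNorm p y := by
  rw [lpNorm, lpNorm, ← Real.mul_rpow (by positivity) (by positivity), Finset.sum_mul_sum,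
    Fintype.sum_prod_type]
  simp only [abs_mul, Real.mul_rpow (abs_nonneg _) (abs_nonneg _)]

lemma Matrix.trace_eq_rank_of_isIdempotentElem {K ι : Type*} [Field K] [Fintype ι]
    [DecidableEq ι] {P : Matrix ι ι K} (hP : IsIdempotentElem P) : P.trace = P.rank := by
  have hlin : IsIdempotentElem (toLin' P) := hP.map toLinAlgEquiv'
  rw [← trace_toLin'_eq, (LinearMap.IsIdempotentElem.isProj_range _ hlin).trace]
  rfl

section projection

variable {n : ℕ} {p q κ : ℝ} {P : Matrix (Fin n) (Fin n) ℝ}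

lemma lpNorm_le_of_mulVec_eq_self (hpq : p.HolderConjugate q) (hsymm : P.IsSymm)
    (hκ : opNorm p 2 P ≤ κ) {v : Fin n → ℝ} (hv : P *ᵥ v = v) :
    lpNorm q v ≤ κ * lpNorm 2 v := by
  rcases eq_or_ne v 0 with rfl | hv0
  · simp [lpNorm_zero hpq.symm.ne_zero, lpNorm_zero two_ne_zero]
  refine lpNorm_le_of_forall_sum_mul_le hpq.symm hv0 fun u => ?_
  calc ∑ i, u i * v i = ∑ i, (P *ᵥ u) i * v i := by
        conv_lhs => rw [← hv]
        simpa only [dotProduct, ← mulVec_transpose, hsymm.eq] using dotProduct_mulVec u P v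
    _ ≤ lpNorm 2 (P *ᵥ u) * lpNorm 2 v := Real.inner_le_Lp_mul_Lq _ _ _ .two_two
    _ ≤ κ * lpNorm p u * lpNorm 2 v := by
        gcongr
        · exact lpNorm_nonneg 2 v
        · exact lpNorm_mulVec_le_of_opNorm_le hpq.pos two_pos hκ u
    _ = κ * lpNorm 2 v * lpNorm p u := by ring

lemma apply_eq_sum_col_mul_col (hsymm : P.IsSymm) (hidem : P * P = P) (i j : Fin n) :
    P i j = ∑ k, P.col k i * P.col k j := by
  conv_lhs => rw [← hidem, mul_apply]
  simp only [col_apply, hsymm.apply j]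

lemma lpNorm_two_col_sq (hsymm : P.IsSymm) (hidem : P * P = P) (k : Fin n) :
    lpNorm 2 (P.col k) ^ 2 = P k k := by
  rw [lpNorm_two_sq]
  conv_rhs => rw [← hidem, mul_apply]
  simp only [col_apply, sq, hsymm.apply k]

lemma entrywise_Lp_le_rank_mul (hp : 1 ≤ p) (hsymm : P.IsSymm) (hidem : P * P = P)
    (hcol : ∀ k, lpNorm p (P.col k) ≤ κ * lpNorm 2 (P.col k)) :
    (∑ i, ∑ j, |P i j| ^ p) ^ (1 / p) ≤ P.rank * κ ^ 2 := by
  calc (∑ i, ∑ j, |P i j| ^ p) ^ (1 / p)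
      = (∑ ij : Fin n × Fin n, |∑ k, P.col k ij.1 * P.col k ij.2| ^ p) ^ (1 / p) := by
        simp only [Fintype.sum_prod_type, ← apply_eq_sum_col_mul_col hsymm hidem]
    _ ≤ ∑ k, (∑ ij : Fin n × Fin n, |P.col k ij.1 * P.col k ij.2| ^ p) ^ (1 / p) :=
        Lp_sum_le_sum_Lp (α := Fin n × Fin n) Finset.univ
          (fun k ij => P.col k ij.1 * P.col k ij.2) hp
    _ = ∑ k, lpNorm p (P.col k) ^ 2 := by
        simp only [Lp_mul_eq_lpNorm_mul_lpNorm, sq]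
    _ ≤ ∑ k, κ ^ 2 * lpNorm 2 (P.col k) ^ 2 := by
        gcongr with k
        rw [← mul_pow]
        exact pow_le_pow_left₀ (lpNorm_nonneg p _) (hcol k) 2
    _ = P.rank * κ ^ 2 := by
        simp only [lpNorm_two_col_sq hsymm hidem, ← Finset.mul_sum]
        rw [show ∑ k, P k k = P.trace from rfl, trace_eq_rank_of_isIdempotentElem hidem, mul_comm]

end projection

theorem stmt6 {n : ℕ} (q qs : ℝ) (hq : 2 < q) (hconj : 1 / q + 1 / qs = 1)
    (r : ℕ) (κ : ℝ) (P : Matrix (Fin n) (Fin n) ℝ)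
    (hsymm : P.IsSymm) (hidem : P * P = P) (hrank : P.rank = r)
    (hκ : opNorm q 2 P ≤ κ) :
    (∀ v : Fin n → ℝ, (∃ w, P.mulVec w = v) → lpNorm qs v ≤ κ * lpNorm 2 v) ∧
    (∑ i, ∑ j, |P i j| ^ qs) ^ (1 / qs) ≤ (r : ℝ) * κ ^ 2 := by
  have hqs : q.HolderConjugate qs :=
    Real.holderConjugate_iff.mpr ⟨by linarith, by simpa only [one_div] using hconj⟩
  have hrange : ∀ v : Fin n → ℝ, (∃ w, P *ᵥ w = v) → lpNorm qs v ≤ κ * lpNorm 2 v := by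
    rintro v ⟨w, rfl⟩
    exact lpNorm_le_of_mulVec_eq_self hqs hsymm hκ (by rw [mulVec_mulVec, hidem])
  refine ⟨hrange, ?_⟩
  rw [← hrank]
  exact entrywise_Lp_le_rank_mul hqs.symm.lt.le hsymm hidem
    fun k => hrange _ ⟨_, mulVec_single_one P k⟩
end

section
/- Let Σ be a positive semidefinite n×n matrix with eigenvalues λ_1 ≥ λ_2 ≥ ... ≥ λ_n and let Π* be the orthogonal projection onto the span of the top r eigenvectors. Then for any symmetric matrix X with tr(X) ≤ r and 0 ⪯ X ⪯ I, we have ⟨X, Π*⟩ ≥ r − (⟨Π*, Σ⟩ − ⟨X, Σ⟩)/(λ_r − λ_{r+1}), provided λ_r > λ_{r+1}. -/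
open scoped BigOperators
open Matrix Finset

/-! Write `x i = v i ⬝ᵥ X *ᵥ v i` (indices from `0`). Then `0 ≤ x i ≤ 1`, `∑ i, x i = tr X ≤ r`,
`⟨X, Π*⟩ = ∑_{i<r} x i`, and `⟨Π*, Σ⟩ - ⟨X, Σ⟩ = ∑_{i<r} λ i (1 - x i) - ∑_{i≥r} λ i x i`.
With `d = r - ∑_{i<r} x i`, the first sum is at least `λ (r-1) d` and, since `λ r ≥ 0` and
`∑_{i≥r} x i ≤ d`, the second is at most `λ r d`; so the gap times `d` is bounded by the
difference of the traces. -/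

section TraceOfRankOne

variable {R ι κ : Type*} [CommSemiring R] [Fintype ι]

lemma trace_transpose_mul_vecMulVec_self (X : Matrix ι ι R) (u : ι → R) :
    (Xᵀ * vecMulVec u u).trace = u ⬝ᵥ X *ᵥ u := by
  rw [mul_vecMulVec, trace_vecMulVec, mulVec_transpose, dotProduct_mulVec]

lemma trace_transpose_mul_sum_vecMulVec_self (X : Matrix ι ι R) (t : Finset κ)
    (v : κ → ι → R) :
    (Xᵀ * ∑ i ∈ t, vecMulVec (v i) (v i)).trace = ∑ i ∈ t, v i ⬝ᵥ X *ᵥ v i := by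
  simp only [mul_sum, trace_sum, trace_transpose_mul_vecMulVec_self]

lemma trace_transpose_mul_sum_smul_vecMulVec_self (X : Matrix ι ι R) (t : Finset κ)
    (c : κ → R) (v : κ → ι → R) :
    (Xᵀ * ∑ i ∈ t, c i • vecMulVec (v i) (v i)).trace = ∑ i ∈ t, c i * (v i ⬝ᵥ X *ᵥ v i) := by
  simp only [mul_sum, trace_sum, Matrix.mul_smul, trace_smul,
    trace_transpose_mul_vecMulVec_self, smul_eq_mul]

end TraceOfRankOne

section Orthonormal

variable {R ι κ : Type*} [CommRing R] [Fintype ι] [Fintype κ] [DecidableEq κ]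

lemma dotProduct_mulVec_sum_smul_vecMulVec_self {v : κ → ι → R}
    (hv : ∀ i j, v i ⬝ᵥ v j = if i = j then 1 else 0) (c : κ → R) (j : κ) :
    v j ⬝ᵥ (∑ i, c i • vecMulVec (v i) (v i)) *ᵥ v j = c j := by
  simp [sum_mulVec, smul_mulVec, vecMulVec_mulVec, hv]

lemma sum_vecMulVec_self_eq_one {v : κ → κ → R}
    (hv : ∀ i j, v i ⬝ᵥ v j = if i = j then 1 else 0) :
    ∑ i, vecMulVec (v i) (v i) = 1 := by
  have h : of v * (of v)ᵀ = 1 := by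
    ext i j
    simpa [mul_apply, one_apply, dotProduct] using hv i j
  calc ∑ i, vecMulVec (v i) (v i) = (of v)ᵀ * of v := by
        ext; simp [mul_apply, Matrix.sum_apply, vecMulVec_apply]
    _ = 1 := mul_eq_one_comm.mp h

end Orthonormal

lemma gap_mul_card_sub_sum_le {ι : Type*} [Fintype ι] [DecidableEq ι] (s : Finset ι)
    {lam x : ι → ℝ} {α β : ℝ} (hα : ∀ i ∈ s, α ≤ lam i) (hβ : ∀ i ∉ s, lam i ≤ β)
    (hβ0 : 0 ≤ β) (hx0 : ∀ i, 0 ≤ x i) (hx1 : ∀ i ∈ s, x i ≤ 1) (hsum : ∑ i, x i ≤ #s) :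
    (α - β) * (#s - ∑ i ∈ s, x i) ≤ ∑ i ∈ s, lam i - ∑ i, lam i * x i := by
  have top : α * (#s - ∑ i ∈ s, x i) ≤ ∑ i ∈ s, lam i * (1 - x i) :=
    calc α * (#s - ∑ i ∈ s, x i) = ∑ i ∈ s, α * (1 - x i) := by
          simp [← mul_sum, sum_sub_distrib]
      _ ≤ _ := sum_le_sum fun i hi =>
          mul_le_mul_of_nonneg_right (hα i hi) (sub_nonneg.2 (hx1 i hi))
  have bottom : ∑ i ∈ sᶜ, lam i * x i ≤ β * (#s - ∑ i ∈ s, x i) :=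
    calc ∑ i ∈ sᶜ, lam i * x i ≤ ∑ i ∈ sᶜ, β * x i := sum_le_sum fun i hi =>
          mul_le_mul_of_nonneg_right (hβ i (mem_compl.1 hi)) (hx0 i)
      _ = β * ∑ i ∈ sᶜ, x i := (mul_sum ..).symm
      _ ≤ _ := by
          refine mul_le_mul_of_nonneg_left ?_ hβ0
          linarith [sum_add_sum_compl s x]
  have split := sum_add_sum_compl s fun i => lam i * x i
  have expand : ∑ i ∈ s, lam i * (1 - x i) = ∑ i ∈ s, lam i - ∑ i ∈ s, lam i * x i := by
    simp [mul_one_sub, sum_sub_distrib]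
  linarith

theorem stmt8 {n : ℕ} (r : ℕ) (hrn : r < n)
    (lam : Fin n → ℝ) (hmono : ∀ i j : Fin n, i ≤ j → lam j ≤ lam i)
    (v : Fin n → Fin n → ℝ)
    (horth : ∀ i j, (v i) ⬝ᵥ (v j) = if i = j then (1 : ℝ) else 0)
    (S : Matrix (Fin n) (Fin n) ℝ)
    (hS : S = ∑ i, lam i • Matrix.vecMulVec (v i) (v i))
    (hpsd : S.PosSemidef)
    (Pstar : Matrix (Fin n) (Fin n) ℝ)
    (hPstar : Pstar = ∑ i ∈ Finset.univ.filter (fun i : Fin n => (i : ℕ) < r),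
      Matrix.vecMulVec (v i) (v i))
    (X : Matrix (Fin n) (Fin n) ℝ)
    (hXtr : X.trace ≤ (r : ℝ)) (hX0 : X.PosSemidef) (hX1 : (1 - X).PosSemidef)
    (hgap : lam ⟨r, hrn⟩ < lam ⟨r - 1, by omega⟩) :
    (r : ℝ) - ((Pstarᵀ * S).trace - (Xᵀ * S).trace)
        / (lam ⟨r - 1, by omega⟩ - lam ⟨r, hrn⟩)
      ≤ (Xᵀ * Pstar).trace := by
  set s := univ.filter fun i : Fin n => (i : ℕ) < r
  set x : Fin n → ℝ := fun i => v i ⬝ᵥ X *ᵥ v i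
  have hcard : #s = r := by simp [s, Fin.card_filter_val_lt, hrn.le]
  have hSv (j : Fin n) : v j ⬝ᵥ S *ᵥ v j = lam j :=
    hS ▸ dotProduct_mulVec_sum_smul_vecMulVec_self horth lam j
  have hx0 (i : Fin n) : 0 ≤ x i := by simpa using hX0.dotProduct_mulVec_nonneg (v i)
  have hx1 (i : Fin n) : x i ≤ 1 := by
    simpa [sub_mulVec, dotProduct_sub, horth] using hX1.dotProduct_mulVec_nonneg (v i)
  have hsum : ∑ i, x i ≤ #s := by
    rw [← trace_transpose_mul_sum_vecMulVec_self, sum_vecMulVec_self_eq_one horth,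
      Matrix.mul_one, trace_transpose, hcard]
    exact hXtr
  have key := gap_mul_card_sub_sum_le s (lam := lam) (x := x)
    (α := lam ⟨r - 1, by omega⟩) (β := lam ⟨r, hrn⟩)
    (fun i hi => hmono _ _ (by simp [s, Fin.le_def] at hi ⊢; omega))
    (fun i hi => hmono _ _ (by simp [s, Fin.le_def] at hi ⊢; omega))
    (by simpa [hSv] using hpsd.dotProduct_mulVec_nonneg (v ⟨r, hrn⟩))
    hx0 (fun i _ => hx1 i) hsum
  have hXP : (Xᵀ * Pstar).trace = ∑ i ∈ s, x i :=
    hPstar ▸ trace_transpose_mul_sum_vecMulVec_self X s v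
  have hXS : (Xᵀ * S).trace = ∑ i, lam i * x i :=
    hS ▸ trace_transpose_mul_sum_smul_vecMulVec_self X univ lam v
  have hPS : (Pstarᵀ * S).trace = ∑ i ∈ s, lam i := by
    rw [← trace_transpose, transpose_mul, transpose_transpose, hPstar,
      trace_transpose_mul_sum_vecMulVec_self]
    simp only [hSv]
  rw [hXP, hXS, hPS, sub_le_comm, le_div_iff₀ (sub_pos.2 hgap)]
  rw [hcard] at key
  linarith
end

section
/- Let Σ* be a PSD matrix whose eigenvalues are all at most λ_max, with orthogonal projection Π* onto its range (assume rank(Σ*) ≤ r and Π* has rank r). Let Π be any rank-r orthogonal projection with ‖Π − Π*‖_F² ≤ ε. Then for any symmetric matrix Σ̃, ‖Σ* − Π Σ̃ Π‖_F² ≤ 8 λ_max² ε + 2‖Π Σ* Π − Π Σ̃ Π‖_F². -/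
/-!
Write `Δ = Π - Π*`. Since `Π* Σ* = Σ* = Σ* Π*`, we have `Σ* - Π Σ* Π = -(Δ Σ* + Π Σ* Δ)`, and
right multiplication by `Σ*` (resp. by `Π`) is a contraction for the Frobenius norm up to the
factor `λ_max` (resp. `1`), because `λ_max² - Σ*²` and `1 - Π Πᵀ = 1 - Π` are positive
semidefinite. Hence `‖Σ* - Π Σ* Π‖_F² ≤ 4 λ_max² ε`, and `(a + b)² ≤ 2a² + 2b²` finishes.
-/

open scoped BigOperators
open Matrix

section frobSq

variable {m n k : ℕ}

lemma frobSq_eq_trace_mul_transpose (A : Matrix (Fin m) (Fin n) ℝ) :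
    frobSq A = (A * Aᵀ).trace := by
  simp [frobSq, trace, mul_apply, sq]

lemma frobSq_transpose (A : Matrix (Fin m) (Fin n) ℝ) : frobSq Aᵀ = frobSq A := by
  simp only [frobSq, transpose_apply]
  exact Finset.sum_comm

lemma frobSq_neg (A : Matrix (Fin m) (Fin n) ℝ) : frobSq (-A) = frobSq A := by
  simp [frobSq]

lemma frobSq_add_le (A B : Matrix (Fin m) (Fin n) ℝ) :
    frobSq (A + B) ≤ 2 * frobSq A + 2 * frobSq B := by
  simp only [frobSq, Finset.mul_sum, ← Finset.sum_add_distrib]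
  refine Finset.sum_le_sum fun i _ => Finset.sum_le_sum fun j _ => ?_
  simp only [Matrix.add_apply]
  nlinarith [sq_nonneg (A i j - B i j)]

lemma frobSq_mul_le_of_posSemidef {S : Matrix (Fin n) (Fin k) ℝ} {c : ℝ}
    (hS : (c • 1 - S * Sᵀ).PosSemidef) (B : Matrix (Fin m) (Fin n) ℝ) :
    frobSq (B * S) ≤ c * frobSq B := by
  have htrace := (hS.mul_mul_conjTranspose_same B).trace_nonneg
  rw [conjTranspose_eq_transpose_of_trivial, Matrix.mul_sub, Matrix.sub_mul, trace_sub,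
    Matrix.mul_smul, Matrix.mul_one, smul_mul, trace_smul, sub_nonneg, smul_eq_mul] at htrace
  rw [frobSq_eq_trace_mul_transpose, frobSq_eq_trace_mul_transpose, transpose_mul]
  simpa only [Matrix.mul_assoc] using htrace

end frobSq

section contraction

variable {m n : ℕ}

lemma posSemidef_sq_smul_one_sub_mul_transpose {S : Matrix (Fin n) (Fin n) ℝ} (hS : S.PosSemidef)
    {lam : ℝ} (heig : ∀ i, hS.1.eigenvalues i ≤ lam) :
    (lam ^ 2 • 1 - S * Sᵀ).PosSemidef := by
  have hsa : IsSelfAdjoint S := hS.1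
  have hSymm : Sᵀ = S := by simpa [conjTranspose_eq_transpose_of_trivial] using hS.1.eq
  open scoped MatrixOrder in
  rw [hSymm, ← nonneg_iff_posSemidef, sub_nonneg, ← pow_two, ← cfc_pow_id (R := ℝ) S 2,
    ← Algebra.algebraMap_eq_smul_one]
  refine cfc_le_algebraMap _ _ S ?_
  rw [hS.1.spectrum_real_eq_range_eigenvalues]
  rintro _ ⟨i, rfl⟩
  exact pow_le_pow_left₀ (hS.eigenvalues_nonneg i) (heig i) 2

lemma posSemidef_one_sub_mul_transpose_of_idempotent {P : Matrix (Fin n) (Fin n) ℝ}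
    (hP1 : P.IsSymm) (hP2 : P * P = P) : ((1 : ℝ) • 1 - P * Pᵀ).PosSemidef := by
  have hsq : (1 - P)ᴴ * (1 - P) = 1 - P := by
    rw [conjTranspose_eq_transpose_of_trivial, transpose_sub, transpose_one, hP1.eq, sub_mul,
      mul_sub, mul_sub, hP2]
    noncomm_ring
  rw [one_smul, hP1.eq, hP2, ← hsq]
  exact posSemidef_conjTranspose_mul_self _

lemma frobSq_mul_le_of_eigenvalues_le {S : Matrix (Fin n) (Fin n) ℝ} (hS : S.PosSemidef)
    {lam : ℝ} (heig : ∀ i, hS.1.eigenvalues i ≤ lam) (B : Matrix (Fin m) (Fin n) ℝ) :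
    frobSq (B * S) ≤ lam ^ 2 * frobSq B :=
  frobSq_mul_le_of_posSemidef (posSemidef_sq_smul_one_sub_mul_transpose hS heig) B

lemma frobSq_mul_le_of_idempotent {P : Matrix (Fin n) (Fin n) ℝ} (hP1 : P.IsSymm)
    (hP2 : P * P = P) (B : Matrix (Fin m) (Fin n) ℝ) : frobSq (B * P) ≤ frobSq B := by
  simpa using frobSq_mul_le_of_posSemidef
    (posSemidef_one_sub_mul_transpose_of_idempotent hP1 hP2) B

end contraction

section compression

variable {n : ℕ}

lemma mul_eq_self_and_eq_self_of_conj_eq {Q S : Matrix (Fin n) (Fin n) ℝ} (hQ : Q * Q = Q)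
    (hS : Q * S * Q = S) : Q * S = S ∧ S * Q = S := by
  constructor
  · calc Q * S = Q * (Q * S * Q) := by rw [hS]
      _ = (Q * Q) * S * Q := by simp only [Matrix.mul_assoc]
      _ = S := by rw [hQ, hS]
  · calc S * Q = (Q * S * Q) * Q := by rw [hS]
      _ = Q * S * (Q * Q) := by simp only [Matrix.mul_assoc]
      _ = S := by rw [hQ, hS]

lemma frobSq_sub_conj_le {S : Matrix (Fin n) (Fin n) ℝ} (hS : S.PosSemidef) {lam : ℝ}
    (heig : ∀ i, hS.1.eigenvalues i ≤ lam) {Q P : Matrix (Fin n) (Fin n) ℝ}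
    (hQ : Q * Q = Q) (hQS : Q * S * Q = S) (hP1 : P.IsSymm) (hP2 : P * P = P) :
    frobSq (S - P * S * P) ≤ 4 * lam ^ 2 * frobSq (P - Q) := by
  obtain ⟨hQS_left, hQS_right⟩ := mul_eq_self_and_eq_self_of_conj_eq hQ hQS
  have hSymm : Sᵀ = S := by simpa [conjTranspose_eq_transpose_of_trivial] using hS.1.eq
  set Δ := P - Q
  have hdecomp : S - P * S * P = -(Δ * S + P * S * Δ) := by
    simp only [Δ, sub_mul, mul_sub, hQS_left, Matrix.mul_assoc P S Q, hQS_right]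
    abel
  have hleft : frobSq (Δ * S) ≤ lam ^ 2 * frobSq Δ := frobSq_mul_le_of_eigenvalues_le hS heig Δ
  have hright : frobSq (P * S * Δ) ≤ lam ^ 2 * frobSq Δ :=
    calc frobSq (P * S * Δ) = frobSq (Δᵀ * S * P) := by
          rw [← frobSq_transpose, transpose_mul, transpose_mul, hSymm, hP1.eq, Matrix.mul_assoc]
      _ ≤ frobSq (Δᵀ * S) := frobSq_mul_le_of_idempotent hP1 hP2 _
      _ ≤ lam ^ 2 * frobSq Δᵀ := frobSq_mul_le_of_eigenvalues_le hS heig _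
      _ = lam ^ 2 * frobSq Δ := by rw [frobSq_transpose]
  rw [hdecomp, frobSq_neg]
  linarith [frobSq_add_le (Δ * S) (P * S * Δ)]

end compression

theorem stmt14_general {n : ℕ} (lammax ε : ℝ)
    (S : Matrix (Fin n) (Fin n) ℝ) (hS : S.PosSemidef)
    (heig : ∀ i, hS.1.eigenvalues i ≤ lammax)
    (Pstar : Matrix (Fin n) (Fin n) ℝ)
    (hPs2 : Pstar * Pstar = Pstar)
    (hran : Pstar * S * Pstar = S)
    (P : Matrix (Fin n) (Fin n) ℝ) (hP1 : P.IsSymm) (hP2 : P * P = P)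
    (hclose : frobSq (P - Pstar) ≤ ε)
    (T : Matrix (Fin n) (Fin n) ℝ) :
    frobSq (S - P * T * P) ≤ 8 * lammax ^ 2 * ε + 2 * frobSq (P * S * P - P * T * P) := by
  have hcompress : frobSq (S - P * S * P) ≤ 4 * lammax ^ 2 * ε :=
    (frobSq_sub_conj_le hS heig hPs2 hran hP1 hP2).trans
      (mul_le_mul_of_nonneg_left hclose (by positivity))
  calc frobSq (S - P * T * P)
      = frobSq ((S - P * S * P) + (P * S * P - P * T * P)) := by rw [sub_add_sub_cancel]
    _ ≤ 2 * frobSq (S - P * S * P) + 2 * frobSq (P * S * P - P * T * P) := frobSq_add_le _ _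
    _ ≤ 8 * lammax ^ 2 * ε + 2 * frobSq (P * S * P - P * T * P) := by linarith

theorem stmt14 {n : ℕ} (r : ℕ) (lammax ε : ℝ)
    (S : Matrix (Fin n) (Fin n) ℝ) (hS : S.PosSemidef)
    (heig : ∀ i, hS.1.eigenvalues i ≤ lammax)
    (hrankS : S.rank ≤ r)
    (Pstar : Matrix (Fin n) (Fin n) ℝ) (hPs1 : Pstar.IsSymm)
    (hPs2 : Pstar * Pstar = Pstar) (hPsr : Pstar.rank = r)
    (hran : Pstar * S * Pstar = S)
    (P : Matrix (Fin n) (Fin n) ℝ) (hP1 : P.IsSymm) (hP2 : P * P = P)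
    (hPr : P.rank = r) (hclose : frobSq (P - Pstar) ≤ ε)
    (T : Matrix (Fin n) (Fin n) ℝ) (hT : T.IsSymm) :
    frobSq (S - P * T * P) ≤ 8 * lammax ^ 2 * ε + 2 * frobSq (P * S * P - P * T * P) :=
  stmt14_general lammax ε S hS heig Pstar hPs2 hran P hP1 hP2 hclose T
end

section
/- Let X be a symmetric matrix with 0 ⪯ X ⪯ I and tr(X) = r, with eigenvalues λ_1(X) ≥ ... ≥ λ_n(X) and eigenvectors u_1,...,u_n, and let Π̃ = Σ_{i=1}^r u_i u_iᵀ. Suppose Π* is a rank-r orthogonal projection with ⟨X, Π*⟩ ≥ r − η for some η ≥ 0. Then ⟨Π*, Π̃⟩ ≥ r − 2η, and hence ‖Π̃ − Π*‖_F² ≤ 4η. -/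
open scoped BigOperators
open Matrix

/-!
Write `c i = uᵢᵀ Π* uᵢ ∈ [0, 1]`; these weights sum to `tr Π* = rank Π* = r`, and
`⟨X, Π*⟩ = ∑ λᵢ cᵢ`. Since the `λᵢ` are sorted, moving weight onto the top `r` indices can only
increase `∑ λᵢ cᵢ` (Ky Fan), so `r - η ≤ ∑_{i<r} λᵢ` and the tail mass `∑_{i≥r} λᵢ` is at most `η`.
Hence `⟨Π*, Π̃⟩ = ∑_{i<r} cᵢ ≥ ∑_{i<r} λᵢ cᵢ ≥ ∑ λᵢ cᵢ - ∑_{i≥r} λᵢ ≥ r - 2η`, and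
`‖Π̃ - Π*‖_F² = tr Π̃ + tr Π* - 2⟨Π*, Π̃⟩ = 2r - 2⟨Π*, Π̃⟩ ≤ 4η`.
-/

open Finset

section Threshold

variable {ι : Type*} [Fintype ι] [DecidableEq ι]

theorem sum_mul_le_sum_of_threshold (s : Finset ι) (lam c : ι → ℝ) (t : ℝ)
    (hs : ∀ i ∈ s, t ≤ lam i) (hsc : ∀ i ∉ s, lam i ≤ t)
    (hc01 : ∀ i, c i ∈ Set.Icc 0 1) (hc : ∑ i, c i = #s) :
    ∑ i, lam i * c i ≤ ∑ i ∈ s, lam i := by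
  -- `(λᵢ - t)(cᵢ - 1[i ∈ s]) ≤ 0` termwise, and the `t`-terms cancel because `∑ c = #s`.
  have key : ∀ i, lam i * c i - (if i ∈ s then lam i else 0) ≤
      t * (c i - if i ∈ s then 1 else 0) := by
    intro i
    split_ifs with hi
    · nlinarith [hs i hi, (hc01 i).2]
    · nlinarith [hsc i hi, (hc01 i).1]
  simpa [sum_sub_distrib, ← mul_sum, sum_ite_mem, hc] using
    sum_le_sum fun i (_ : i ∈ univ) => key i

theorem card_sub_two_mul_le_sum_of_threshold (s : Finset ι) (lam c : ι → ℝ) (t η : ℝ)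
    (hs : ∀ i ∈ s, t ≤ lam i) (hsc : ∀ i ∉ s, lam i ≤ t)
    (hl01 : ∀ i, lam i ∈ Set.Icc 0 1) (hc01 : ∀ i, c i ∈ Set.Icc 0 1)
    (hl : ∑ i, lam i = #s) (hc : ∑ i, c i = #s)
    (hcorr : (#s : ℝ) - η ≤ ∑ i, lam i * c i) :
    (#s : ℝ) - 2 * η ≤ ∑ i ∈ s, c i := by
  have htail : ∑ i ∈ sᶜ, lam i ≤ η := by
    have := sum_mul_le_sum_of_threshold s lam c t hs hsc hc01 hc
    linarith [sum_add_sum_compl s lam]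
  have hhead : ∑ i ∈ s, lam i * c i ≤ ∑ i ∈ s, c i :=
    sum_le_sum fun i _ => mul_le_of_le_one_left (hc01 i).1 (hl01 i).2
  have htail' : ∑ i ∈ sᶜ, lam i * c i ≤ ∑ i ∈ sᶜ, lam i :=
    sum_le_sum fun i _ => mul_le_of_le_one_right (hl01 i).1 (hc01 i).2
  linarith [sum_add_sum_compl s fun i => lam i * c i]

end Threshold

theorem Antitone.exists_threshold {n : ℕ} {lam : Fin n → ℝ} (h : Antitone lam) (r : ℕ) :
    ∃ t, (∀ i : Fin n, (i : ℕ) < r → t ≤ lam i) ∧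
      ∀ i : Fin n, r ≤ (i : ℕ) → lam i ≤ t := by
  by_cases hr : r < n
  · exact ⟨lam ⟨r, hr⟩, fun i hi => h (Fin.le_def.2 hi.le),
      fun i hi => h (Fin.le_def.2 hi)⟩
  · exact ⟨⨅ i, lam i, fun i _ => ciInf_le (Set.finite_range lam).bddBelow i,
      fun i hi => absurd (hi.trans_lt i.isLt) hr⟩

namespace Matrix

theorem isSymm_sum_vecMulVec {m : Type*} (u : m → m → ℝ) (s : Finset m) :
    (∑ i ∈ s, vecMulVec (u i) (u i)).IsSymm := by
  simp [IsSymm, transpose_sum]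

variable {m : Type*} [Fintype m]

theorem trace_vecMulVec_self_mul {R : Type*} [CommSemiring R] (v : m → R) (M : Matrix m m R) :
    (vecMulVec v v * M).trace = v ⬝ᵥ M *ᵥ v := by
  rw [vecMulVec_mul, trace_vecMulVec, dotProduct_comm, dotProduct_mulVec]

theorem trace_sum_vecMulVec_mul (u : m → m → ℝ) (s : Finset m) (M : Matrix m m ℝ) :
    ((∑ i ∈ s, vecMulVec (u i) (u i)) * M).trace = ∑ i ∈ s, u i ⬝ᵥ M *ᵥ u i := by
  simp [sum_mul, trace_sum, trace_vecMulVec_self_mul]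

theorem trace_sum_smul_vecMulVec_mul (u : m → m → ℝ) (lam : m → ℝ) (s : Finset m)
    (M : Matrix m m ℝ) :
    ((∑ i ∈ s, lam i • vecMulVec (u i) (u i)) * M).trace =
      ∑ i ∈ s, lam i * (u i ⬝ᵥ M *ᵥ u i) := by
  simp [sum_mul, trace_sum, trace_vecMulVec_self_mul]

theorem posSemidef_of_isSymm_of_isIdempotentElem {P : Matrix m m ℝ} (hs : P.IsSymm)
    (hi : IsIdempotentElem P) : P.PosSemidef := by
  have h := posSemidef_conjTranspose_mul_self P
  rwa [conjTranspose_eq_transpose_of_trivial, hs.eq, hi.eq] at h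

variable [DecidableEq m]

theorem dotProduct_mulVec_mem_Icc {A : Matrix m m ℝ} (h0 : A.PosSemidef)
    (h1 : (1 - A).PosSemidef) {v : m → ℝ} (hv : v ⬝ᵥ v = 1) :
    v ⬝ᵥ A *ᵥ v ∈ Set.Icc 0 1 := by
  have hA := h0.dotProduct_mulVec_nonneg v
  have hB := h1.dotProduct_mulVec_nonneg v
  simp only [star_trivial, sub_mulVec, one_mulVec, dotProduct_sub, hv] at hA hB
  exact ⟨hA, by linarith⟩

theorem trace_eq_rank_of_isIdempotentElem_s16 {K : Type*} [Field K] {P : Matrix m m K}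
    (hP : IsIdempotentElem P) : P.trace = P.rank := by
  have h : IsIdempotentElem (toLin' P) := by
    rw [IsIdempotentElem, Module.End.mul_eq_comp, ← toLin'_mul, hP.eq]
  rw [← trace_toLin'_eq, (LinearMap.IsIdempotentElem.isProj_range _ h).trace, rank,
    toLin'_apply']

section Orthonormal

variable {u : m → m → ℝ} (hu : ∀ i j, u i ⬝ᵥ u j = if i = j then 1 else 0)
include hu

theorem sum_vecMulVec_self_eq_one : ∑ i, vecMulVec (u i) (u i) = 1 := by
  have h : of u * (of u)ᵀ = 1 := by
    ext i j
    simpa [mul_apply, one_apply, dotProduct] using hu i j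
  rw [← mul_eq_one_comm.mp h]
  ext j k
  simp [sum_apply, vecMulVec_apply, mul_apply]

theorem trace_eq_sum_dotProduct_mulVec (M : Matrix m m ℝ) :
    M.trace = ∑ i, u i ⬝ᵥ M *ᵥ u i := by
  rw [← trace_sum_vecMulVec_mul, sum_vecMulVec_self_eq_one hu, one_mul]

theorem dotProduct_sum_smul_vecMulVec_mulVec (lam : m → ℝ) (j : m) :
    u j ⬝ᵥ (∑ i, lam i • vecMulVec (u i) (u i)) *ᵥ u j = lam j := by
  simp [sum_mulVec, smul_mulVec, vecMulVec_mulVec, hu]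

theorem isIdempotentElem_sum_vecMulVec (s : Finset m) :
    IsIdempotentElem (∑ i ∈ s, vecMulVec (u i) (u i)) := by
  simp [IsIdempotentElem, sum_mul_sum, vecMulVec_mul_vecMulVec, hu,
    apply_ite (vecMulVec _)]

end Orthonormal

end Matrix

theorem frobSq_eq_trace_transpose_mul {m n : ℕ} (A : Matrix (Fin m) (Fin n) ℝ) :
    frobSq A = (Aᵀ * A).trace := by
  simp only [frobSq, trace, Matrix.diag, mul_apply, transpose_apply, sq]
  exact sum_comm

theorem frobSq_sub_of_isSymm_of_isIdempotentElem {n : ℕ} {P Q : Matrix (Fin n) (Fin n) ℝ}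
    (hPs : P.IsSymm) (hPi : IsIdempotentElem P) (hQs : Q.IsSymm) (hQi : IsIdempotentElem Q) :
    frobSq (P - Q) = P.trace + Q.trace - 2 * (Qᵀ * P).trace := by
  rw [frobSq_eq_trace_transpose_mul, transpose_sub, hPs.eq, hQs.eq, sub_mul, mul_sub, mul_sub,
    hPi.eq, hQi.eq, trace_sub, trace_sub, trace_sub, trace_mul_comm P Q]
  ring

theorem stmt16_general {n : ℕ} (r : ℕ) (hrn : r ≤ n) (η : ℝ)
    (X : Matrix (Fin n) (Fin n) ℝ)
    (lam : Fin n → ℝ) (hmono : ∀ i j : Fin n, i ≤ j → lam j ≤ lam i)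
    (u : Fin n → Fin n → ℝ)
    (horth : ∀ i j, (u i) ⬝ᵥ (u j) = if i = j then (1 : ℝ) else 0)
    (hX : X = ∑ i, lam i • Matrix.vecMulVec (u i) (u i))
    (hX0 : X.PosSemidef) (hX1 : (1 - X).PosSemidef) (htr : X.trace = (r : ℝ))
    (Ptil Pstar : Matrix (Fin n) (Fin n) ℝ)
    (hPtil : Ptil = ∑ i ∈ Finset.univ.filter (fun i : Fin n => (i : ℕ) < r),
      Matrix.vecMulVec (u i) (u i))
    (hPs1 : Pstar.IsSymm) (hPs2 : Pstar * Pstar = Pstar) (hPsr : Pstar.rank = r)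
    (hcorr : (r : ℝ) - η ≤ (Xᵀ * Pstar).trace) :
    (r : ℝ) - 2 * η ≤ (Pstarᵀ * Ptil).trace ∧ frobSq (Ptil - Pstar) ≤ 4 * η := by
  set s := univ.filter (fun i : Fin n => (i : ℕ) < r) with hs_def
  have hs : (#s : ℝ) = r := by rw [hs_def, Fin.card_filter_val_lt, min_eq_right hrn]
  have hu : ∀ i, u i ⬝ᵥ u i = 1 := fun i => by simpa using horth i i
  have hPtrace : Pstar.trace = r := by rw [trace_eq_rank_of_isIdempotentElem_s16 hPs2, hPsr]
  set c := fun i => u i ⬝ᵥ Pstar *ᵥ u i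
  have hc : ∀ i, c i ∈ Set.Icc 0 1 := fun i =>
    dotProduct_mulVec_mem_Icc (posSemidef_of_isSymm_of_isIdempotentElem hPs1 hPs2)
      (posSemidef_of_isSymm_of_isIdempotentElem (by simp [IsSymm, hPs1.eq])
        (IsIdempotentElem.one_sub hPs2)) (hu i)
  have hlam : ∀ i, lam i ∈ Set.Icc 0 1 := fun i => by
    simpa [hX, dotProduct_sum_smul_vecMulVec_mulVec horth] using
      dotProduct_mulVec_mem_Icc hX0 hX1 (hu i)
  have hsum_lam : ∑ i, lam i = #s := by
    simpa [hX, dotProduct_sum_smul_vecMulVec_mulVec horth, hs] using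
      (trace_eq_sum_dotProduct_mulVec horth X).symm.trans htr
  have hsum_c : ∑ i, c i = #s := by rw [← trace_eq_sum_dotProduct_mulVec horth, hPtrace, hs]
  have hXP : (Xᵀ * Pstar).trace = ∑ i, lam i * c i := by
    rw [← conjTranspose_eq_transpose_of_trivial, hX0.isHermitian.eq, hX,
      trace_sum_smul_vecMulVec_mul]
  have hPP : (Pstarᵀ * Ptil).trace = ∑ i ∈ s, c i := by
    rw [hPs1.eq, trace_mul_comm, hPtil, trace_sum_vecMulVec_mul]
  obtain ⟨t, hts, hst⟩ := Antitone.exists_threshold hmono r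
  have hmain : (r : ℝ) - 2 * η ≤ (Pstarᵀ * Ptil).trace := by
    rw [hPP, ← hs]
    exact card_sub_two_mul_le_sum_of_threshold s lam c t η (by simpa [s] using hts)
      (by simpa [s] using hst) hlam hc hsum_lam hsum_c (by rwa [hs, ← hXP])
  have hPtil_trace : Ptil.trace = r := by simp [hPtil, trace_sum, hu, hs]
  refine ⟨hmain, ?_⟩
  rw [frobSq_sub_of_isSymm_of_isIdempotentElem (hPtil ▸ isSymm_sum_vecMulVec u s)
    (hPtil ▸ isIdempotentElem_sum_vecMulVec horth s) hPs1 hPs2, hPtil_trace, hPtrace]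
  linarith

theorem stmt16 {n : ℕ} (r : ℕ) (hrn : r ≤ n) (η : ℝ) (hη : 0 ≤ η)
    (X : Matrix (Fin n) (Fin n) ℝ)
    (lam : Fin n → ℝ) (hmono : ∀ i j : Fin n, i ≤ j → lam j ≤ lam i)
    (u : Fin n → Fin n → ℝ)
    (horth : ∀ i j, (u i) ⬝ᵥ (u j) = if i = j then (1 : ℝ) else 0)
    (hX : X = ∑ i, lam i • Matrix.vecMulVec (u i) (u i))
    (hX0 : X.PosSemidef) (hX1 : (1 - X).PosSemidef) (htr : X.trace = (r : ℝ))
    (Ptil Pstar : Matrix (Fin n) (Fin n) ℝ)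
    (hPtil : Ptil = ∑ i ∈ Finset.univ.filter (fun i : Fin n => (i : ℕ) < r),
      Matrix.vecMulVec (u i) (u i))
    (hPs1 : Pstar.IsSymm) (hPs2 : Pstar * Pstar = Pstar) (hPsr : Pstar.rank = r)
    (hcorr : (r : ℝ) - η ≤ (Xᵀ * Pstar).trace) :
    (r : ℝ) - 2 * η ≤ (Pstarᵀ * Ptil).trace ∧ frobSq (Ptil - Pstar) ≤ 4 * η :=
  stmt16_general r hrn η X lam hmono u horth hX hX0 hX1 htr Ptil Pstar hPtil hPs1 hPs2 hPsr hcorr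
end
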